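/- arXiv:2306.06006 — 3 statements merged into one kernel-verified Lean document; each statement's English description precedes it below -/
import Mathlib

section
/- Let a > 0, a ≠ 1, and b a complex number. Define φ(w) = a·w + b and ψ(w) = a⁻¹·w + a⁻¹·conj(b). Then for every natural number n and every complex w, φ^[n](ψ^[n](w)) = w + 2·((1 - aⁿ)/(1 - a))·Re(b). -/
theorem affine_iterate_comp (a : ℝ) (ha : 0 < a) (ha1 : a ≠ 1) (b : ℂ)
    (φ ψ : ℂ → ℂ)
    (hφ : ∀ w : ℂ, φ w = (a : ℂ) * w + b)
    (hψ : ∀ w : ℂ, ψ w = (a : ℂ)⁻¹ * w + (a : ℂ)⁻¹ * (starRingEnd ℂ b)) :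
    ∀ (n : ℕ) (w : ℂ),
      φ^[n] (ψ^[n] w) = w + 2 * ((1 - (a : ℂ) ^ n) / (1 - (a : ℂ))) * (b.re : ℂ) := by
  have haC : (a : ℂ) ≠ 0 := by exact_mod_cast ha.ne'
  have ha1C : (1 : ℂ) - (a : ℂ) ≠ 0 := by
    intro h
    apply ha1
    have : (a : ℂ) = 1 := by linear_combination -h
    exact_mod_cast this
  -- φ^[n] is affine with slope a^n
  have hslope : ∀ (n : ℕ) (x c : ℂ), φ^[n] (x + c) = φ^[n] x + (a : ℂ) ^ n * c := by
    intro n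
    induction n with
    | zero => simp
    | succ n ih =>
      intro x c
      rw [Function.iterate_succ_apply, Function.iterate_succ_apply, hφ, hφ]
      have : (a : ℂ) * (x + c) + b = ((a : ℂ) * x + b) + (a : ℂ) * c := by ring
      rw [this, ih]
      ring
  have hcomp : ∀ x : ℂ, φ (ψ x) = x + 2 * (b.re : ℂ) := by
    intro x
    rw [hψ, hφ]
    have hre : (b.re : ℂ) = (b + starRingEnd ℂ b) / 2 := by
      rw [Complex.add_conj]; push_cast; ring
    rw [hre]
    field_simp
    ring
  intro n
  induction n with
  | zero => simp
  | succ n ih =>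
    intro w
    rw [Function.iterate_succ_apply, Function.iterate_succ_apply' (f := ψ), hcomp,
      hslope, ih]
    field_simp
    ring
end

section
/- Let T be a bounded linear operator on a Banach space X such that ‖Tⁿ‖ ≤ K·pⁿ for all n, where K ≥ 1 and p ∈ (0,1). Then T has the positive shadowing property: for every ε > 0 there exists δ > 0 such that every δ-pseudotrajectory (f_n)_{n≥0} of T satisfies ‖Tⁿ f_0 − f_n‖ ≤ ε for all n ∈ ℕ. -/
/-!
Telescoping along a pseudotrajectory gives
`Tⁿ f₀ - fₙ = ∑_{k<n} T^{n-1-k} (T fₖ - fₖ₊₁)`, so the shadowing error is at most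
`δ · ∑_{k<n} ‖Tᵏ‖ ≤ δ K / (1 - p)`, and `δ = ε (1 - p) / K` works.
-/

open Finset

namespace ContinuousLinearMap

variable {𝕜 E : Type*} [NontriviallyNormedField 𝕜] [SeminormedAddCommGroup E] [NormedSpace 𝕜 E]

def HasPositiveShadowing (T : E →L[𝕜] E) : Prop :=
  ∀ ε > (0 : ℝ), ∃ δ > (0 : ℝ), ∀ f : ℕ → E,
    (∀ n : ℕ, ‖T (f n) - f (n + 1)‖ ≤ δ) → ∀ n : ℕ, ‖(T ^ n) (f 0) - f n‖ ≤ ε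

theorem pow_apply_sub_eq_sum (T : E →L[𝕜] E) (f : ℕ → E) (n : ℕ) :
    (T ^ n) (f 0) - f n = ∑ k ∈ range n, (T ^ (n - 1 - k)) (T (f k) - f (k + 1)) := by
  have hstep : ∀ k ∈ range n, (T ^ (n - k)) (f k) - (T ^ (n - (k + 1))) (f (k + 1))
      = (T ^ (n - 1 - k)) (T (f k) - f (k + 1)) := by
    intro k hk
    rw [show n - k = n - 1 - k + 1 by have := mem_range.mp hk; omega, pow_succ, map_sub,
      show n - (k + 1) = n - 1 - k by omega]
    rfl
  rw [← sum_congr rfl hstep, sum_range_sub' (fun k ↦ (T ^ (n - k)) (f k))]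
  simp

theorem norm_pow_apply_sub_le (T : E →L[𝕜] E) {f : ℕ → E} {δ : ℝ}
    (hf : ∀ n, ‖T (f n) - f (n + 1)‖ ≤ δ) (n : ℕ) :
    ‖(T ^ n) (f 0) - f n‖ ≤ δ * ∑ k ∈ range n, ‖T ^ k‖ := by
  rw [pow_apply_sub_eq_sum, ← sum_range_reflect (fun k ↦ ‖T ^ k‖), mul_sum]
  refine norm_sum_le_of_le _ fun k _ ↦ ?_
  rw [mul_comm]
  exact (T ^ _).le_opNorm _ |>.trans (mul_le_mul_of_nonneg_left (hf k) (norm_nonneg _))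

theorem hasPositiveShadowing_of_sum_norm_pow_le (T : E →L[𝕜] E) {C : ℝ} (hC : 0 < C)
    (hsum : ∀ n, ∑ k ∈ range n, ‖T ^ k‖ ≤ C) : T.HasPositiveShadowing := by
  intro ε hε
  refine ⟨ε / C, by positivity, fun f hf n ↦ ?_⟩
  calc ‖(T ^ n) (f 0) - f n‖ ≤ ε / C * ∑ k ∈ range n, ‖T ^ k‖ := T.norm_pow_apply_sub_le hf n
    _ ≤ ε / C * C := by gcongr; exact hsum n
    _ = ε := div_mul_cancel₀ ε hC.ne'

theorem sum_norm_pow_le_of_norm_pow_le_geometric (T : E →L[𝕜] E) {K p : ℝ} (hp0 : 0 ≤ p)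
    (hp1 : p < 1) (hT : ∀ n : ℕ, ‖T ^ n‖ ≤ K * p ^ n) (n : ℕ) :
    ∑ k ∈ range n, ‖T ^ k‖ ≤ K / (1 - p) := by
  have hK : 0 ≤ K := by simpa using (norm_nonneg _).trans (hT 0)
  calc ∑ k ∈ range n, ‖T ^ k‖ ≤ K * ∑ k ∈ range n, p ^ k := by
        rw [mul_sum]; exact sum_le_sum fun k _ ↦ hT k
    _ ≤ K * (1 / (1 - p)) := by
        gcongr
        simpa using geom_sum_Ico_le_of_lt_one (m := 0) (n := n) hp0 hp1
    _ = K / (1 - p) := mul_one_div K (1 - p)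

end ContinuousLinearMap

theorem power_bounded_positive_shadowing_general
    {X : Type*} [NormedAddCommGroup X] [NormedSpace ℂ X]
    (T : X →L[ℂ] X) (K p : ℝ) (hK : 1 ≤ K) (hp0 : 0 < p) (hp1 : p < 1)
    (hT : ∀ n : ℕ, ‖T ^ n‖ ≤ K * p ^ n) :
    ∀ ε > (0 : ℝ), ∃ δ > (0 : ℝ), ∀ f : ℕ → X,
      (∀ n : ℕ, ‖T (f n) - f (n + 1)‖ ≤ δ) →
      ∀ n : ℕ, ‖(T ^ n) (f 0) - f n‖ ≤ ε :=
  T.hasPositiveShadowing_of_sum_norm_pow_le (div_pos (by linarith) (sub_pos.2 hp1))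
    (T.sum_norm_pow_le_of_norm_pow_le_geometric hp0.le hp1 hT)

theorem power_bounded_positive_shadowing
    {X : Type*} [NormedAddCommGroup X] [NormedSpace ℂ X] [CompleteSpace X]
    (T : X →L[ℂ] X) (K p : ℝ) (hK : 1 ≤ K) (hp0 : 0 < p) (hp1 : p < 1)
    (hT : ∀ n : ℕ, ‖T ^ n‖ ≤ K * p ^ n) :
    ∀ ε > (0 : ℝ), ∃ δ > (0 : ℝ), ∀ f : ℕ → X,
      (∀ n : ℕ, ‖T (f n) - f (n + 1)‖ ≤ δ) →
      ∀ n : ℕ, ‖(T ^ n) (f 0) - f n‖ ≤ ε :=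
  power_bounded_positive_shadowing_general T K p hK hp0 hp1 hT
end

section
/- Let T be a bounded linear operator on a Banach space X and suppose there exists a nonzero continuous linear functional Λ : X → ℂ with Λ ∘ T = Λ. Then T does not have the positive shadowing property. -/
theorem invariant_functional_no_positive_shadowing
    {X : Type*} [NormedAddCommGroup X] [NormedSpace ℂ X] [CompleteSpace X]
    (T : X →L[ℂ] X) (Λ : X →L[ℂ] ℂ) (hΛ : Λ ≠ 0)
    (hinv : ∀ f : X, Λ (T f) = Λ f) :
    ¬ (∀ ε > (0 : ℝ), ∃ δ > (0 : ℝ), ∀ f : ℕ → X,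
        (∀ n : ℕ, ‖T (f n) - f (n + 1)‖ ≤ δ) →
        ∃ x : X, ∀ n : ℕ, ‖(T ^ n) x - f n‖ ≤ ε) := by
  intro h
  obtain ⟨δ, hδ, hshadow⟩ := h 1 one_pos
  -- get a vector with Λ g ≠ 0
  obtain ⟨g, hg⟩ : ∃ g : X, Λ g ≠ 0 := by
    by_contra hc
    push_neg at hc
    exact hΛ (ContinuousLinearMap.ext fun x => by simp [hc x])
  have hgne : g ≠ 0 := fun h0 => hg (by simp [h0])
  set e : X := ((‖g‖ : ℂ))⁻¹ • g with he
  have hene : ‖e‖ = 1 := by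
    rw [he, norm_smul, norm_inv, Complex.norm_real, norm_norm,
      inv_mul_cancel₀ (norm_ne_zero_iff.mpr hgne)]
  have hΛe : Λ e ≠ 0 := by
    rw [he, map_smul, smul_eq_mul]
    exact mul_ne_zero (inv_ne_zero (by
      exact_mod_cast norm_ne_zero_iff.mpr hgne)) hg
  -- pseudotrajectory
  set f : ℕ → X := fun n => Nat.rec 0 (fun _ fn => T fn + (δ:ℂ) • e) n with hf
  have hstep : ∀ n, f (n + 1) = T (f n) + (δ:ℂ) • e := fun n => rfl
  have hps : ∀ n, ‖T (f n) - f (n + 1)‖ ≤ δ := by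
    intro n
    rw [hstep]
    simp only [sub_add_cancel_left, norm_neg, norm_smul, hene, mul_one]
    rw [Complex.norm_real, Real.norm_eq_abs, abs_of_pos hδ]
  obtain ⟨x, hx⟩ := hshadow f hps
  -- Λ of pseudotrajectory
  have hΛf : ∀ n, Λ (f n) = (n : ℂ) * ((δ : ℂ) * Λ e) := by
    intro n
    induction n with
    | zero => simp [hf]
    | succ n ih =>
      rw [hstep, map_add, hinv, ih]
      simp only [map_smul, smul_eq_mul]
      push_cast
      ring
  -- Λ of true orbit
  have hΛorb : ∀ n, Λ ((T ^ n) x) = Λ x := by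
    intro n
    induction n with
    | zero => simp
    | succ n ih =>
      rw [pow_succ']
      simpa [hinv] using ih
  -- derive contradiction
  have hbound : ∀ n : ℕ, (n : ℝ) * (δ * ‖Λ e‖) ≤ ‖Λ x‖ + ‖Λ‖ := by
    intro n
    have h1 : ‖Λ ((T ^ n) x) - Λ (f n)‖ ≤ ‖Λ‖ * 1 := by
      rw [← map_sub]
      calc ‖Λ ((T ^ n) x - f n)‖ ≤ ‖Λ‖ * ‖(T ^ n) x - f n‖ := Λ.le_opNorm _
        _ ≤ ‖Λ‖ * 1 := by
            exact mul_le_mul_of_nonneg_left (hx n) (norm_nonneg _)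
    rw [hΛorb, hΛf] at h1
    have h2 : ‖(n : ℂ) * ((δ : ℂ) * Λ e)‖ ≤ ‖Λ x‖ + ‖Λ‖ := by
      calc ‖(n : ℂ) * ((δ : ℂ) * Λ e)‖
          ≤ ‖Λ x‖ + ‖Λ x - (n : ℂ) * ((δ : ℂ) * Λ e)‖ := by
            have := norm_sub_norm_le (Λ x) ((n : ℂ) * ((δ : ℂ) * Λ e))
            linarith [norm_sub_norm_le ((n : ℂ) * ((δ : ℂ) * Λ e)) (Λ x),
              norm_sub_rev (Λ x) ((n : ℂ) * ((δ : ℂ) * Λ e))]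
        _ ≤ ‖Λ x‖ + ‖Λ‖ := by linarith [h1]
    calc (n : ℝ) * (δ * ‖Λ e‖) = ‖(n : ℂ) * ((δ : ℂ) * Λ e)‖ := by
          simp [norm_mul, Complex.norm_natCast, Complex.norm_real,
            Real.norm_eq_abs, abs_of_pos hδ]
      _ ≤ ‖Λ x‖ + ‖Λ‖ := h2
  have hpos : 0 < δ * ‖Λ e‖ := mul_pos hδ (norm_pos_iff.mpr hΛe)
  obtain ⟨n, hn⟩ := exists_nat_gt ((‖Λ x‖ + ‖Λ‖) / (δ * ‖Λ e‖))
  have := hbound n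
  have h3 := (div_lt_iff₀ hpos).mp hn
  linarith
end
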